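/- arXiv:1505.03555 — 2 statements merged into one kernel-verified Lean document; each statement's English description precedes it below -/
import Mathlib

section
/- In the no-agreement congestion game with N subscribers, M content providers, demand φ > 0 and congestion parameter a > 0, if all content providers charge the same price p ≥ 0, then at every Nash equilibrium the total traffic into each content provider m is the same and equals Σ_{n=1}^N x_n^m = N·φ/M. -/
open Finset

/-- A strategy of a subscriber is feasible if it is nonnegative and sums to the demand `φ`. -/
def Feasible (M : ℕ) (φ : ℝ) (v : Fin M → ℝ) : Prop :=
  (∀ m, 0 ≤ v m) ∧ ∑ m, v m = φ

/-- Cost of subscriber `n` in the no-agreement congestion game with linear preference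
cost `D(t) = a·t` and prices `p`. -/
noncomputable def cost (N M : ℕ) (a : ℝ) (p : Fin M → ℝ)
    (x : Fin N → Fin M → ℝ) (n : Fin N) : ℝ :=
  ∑ m, x n m * (a * (∑ n', x n' m) + p m)

/-- Nash equilibrium of the no-agreement congestion game. -/
def IsNash (N M : ℕ) (φ a : ℝ) (p : Fin M → ℝ) (x : Fin N → Fin M → ℝ) : Prop :=
  (∀ n, Feasible M φ (x n)) ∧
  ∀ (n : Fin N) (y : Fin M → ℝ), Feasible M φ y →
    cost N M a p x n ≤ cost N M a p (Function.update x n y) n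

/-!
At an equilibrium, a subscriber sending traffic to CP `l` cannot gain by shifting a small amount
`ε` of it to CP `k`; the exact cost change is `ε (g k - g l) + 2 a ε²` with marginal cost
`g m = a (x_n^m + T^m) + p^m` (`T^m` the total traffic into `m`), so `g l ≤ g k`. With equal prices
and `T^l > T^k` this forces `x_n^l ≤ x_n^k` for every subscriber, and summing over subscribers
contradicts `T^l > T^k`. Hence all `T^m` are equal, and they add up to `N φ`.
-/

def traffic {N M : ℕ} (x : Fin N → Fin M → ℝ) (m : Fin M) : ℝ :=
  ∑ n, x n m

section

variable {N M : ℕ}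

lemma traffic_update (x : Fin N → Fin M → ℝ) (n : Fin N) (y : Fin M → ℝ) (m : Fin M) :
    traffic (Function.update x n y) m = traffic x m - x n m + y m := by
  simp only [traffic, ← Finset.add_sum_erase _ _ (mem_univ n), Function.update_self]
  rw [Finset.sum_congr rfl fun n' hn' => by rw [Function.update_of_ne (ne_of_mem_erase hn')]]
  ring

lemma sum_traffic {φ : ℝ} {x : Fin N → Fin M → ℝ} (hx : ∀ n, Feasible M φ (x n)) :
    ∑ m, traffic x m = N * φ := by
  simp only [traffic]
  rw [Finset.sum_comm]
  simp [fun n => (hx n).2]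

lemma cost_update_add_sub_cost (a : ℝ) (p : Fin M → ℝ) (x : Fin N → Fin M → ℝ) (n : Fin N)
    (δ : Fin M → ℝ) :
    cost N M a p (Function.update x n (x n + δ)) n - cost N M a p x n =
      ∑ m, δ m * (a * (x n m + traffic x m) + p m) + a * ∑ m, δ m ^ 2 := by
  change ∑ m, _ * (a * traffic _ m + _) - ∑ m, x n m * (a * traffic x m + p m) = _
  simp only [Function.update_self, traffic_update, Pi.add_apply, mul_sum, ← sum_sub_distrib,
    ← sum_add_distrib]
  exact sum_congr rfl fun m _ => by ring

end

lemma nonneg_of_forall_nonneg_mul_add_mul_sq {b c r : ℝ} (hr : 0 < r)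
    (h : ∀ ε, 0 < ε → ε ≤ r → 0 ≤ ε * b + c * ε ^ 2) : 0 ≤ b := by
  by_contra! hb
  set ε := min r (-b / (|c| + 1))
  have hε_pos : 0 < ε := lt_min hr (div_pos (by linarith) (by positivity))
  have hε_le : ε ≤ -b / (|c| + 1) := min_le_right _ _
  have hcε : |c| * ε < -b := by
    rw [le_div_iff₀ (by positivity)] at hε_le
    nlinarith [abs_nonneg c]
  have hc : c * ε ^ 2 ≤ |c| * ε ^ 2 := mul_le_mul_of_nonneg_right (le_abs_self c) (by positivity)
  nlinarith [h ε hε_pos (min_le_left _ _)]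

lemma Feasible.add_single_sub_single {M : ℕ} {φ ε : ℝ} {v : Fin M → ℝ} (hv : Feasible M φ v)
    {k l : Fin M} (hε : 0 ≤ ε) (hεl : ε ≤ v l) :
    Feasible M φ (v + (Pi.single k ε - Pi.single l ε)) := by
  refine ⟨fun m => ?_, ?_⟩
  · have hk : 0 ≤ Pi.single (M := fun _ => ℝ) k ε m := by
      rcases eq_or_ne m k with rfl | h <;> simp [*]
    rcases eq_or_ne m l with rfl | h
    · simp only [Pi.add_apply, Pi.sub_apply, Pi.single_eq_same]; linarith
    · simp only [Pi.add_apply, Pi.sub_apply, Pi.single_eq_of_ne h]; linarith [hv.1 m]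
  · simp [sum_add_distrib, sum_sub_distrib, hv.2]

namespace IsNash

variable {N M : ℕ} {φ a : ℝ} {p : Fin M → ℝ} {x : Fin N → Fin M → ℝ}

theorem marginal_cost_le (hx : IsNash N M φ a p x) {n : Fin N} {k l : Fin M}
    (hl : 0 < x n l) :
    a * (x n l + traffic x l) + p l ≤ a * (x n k + traffic x k) + p k := by
  rcases eq_or_ne k l with rfl | hkl
  · rfl
  set g : Fin M → ℝ := fun m => a * (x n m + traffic x m) + p m
  suffices 0 ≤ g k - g l by linarith
  refine nonneg_of_forall_nonneg_mul_add_mul_sq (c := 2 * a) hl fun ε hε hεl => ?_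
  have hdev := hx.2 n _ ((hx.1 n).add_single_sub_single (k := k) hε.le hεl)
  have hexp := cost_update_add_sub_cost a p x n (Pi.single k ε - Pi.single l ε)
  rw [Fintype.sum_eq_add k l hkl (by intro m hm; simp [hm.1, hm.2]),
    Fintype.sum_eq_add k l hkl (by intro m hm; simp [hm.1, hm.2])] at hexp
  simp only [Pi.sub_apply, Pi.single_eq_same, Pi.single_eq_of_ne hkl,
    Pi.single_eq_of_ne hkl.symm] at hexp
  linarith

theorem traffic_le_of_price_le (hx : IsNash N M φ a p x) (ha : 0 < a) {k l : Fin M}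
    (hp : p k ≤ p l) : traffic x l ≤ traffic x k := by
  by_contra! hlt
  have hxn : ∀ n, x n l ≤ x n k := by
    intro n
    rcases ((hx.1 n).1 l).eq_or_lt with h0 | hpos
    · exact h0 ▸ (hx.1 n).1 k
    · have hmarg := hx.marginal_cost_le (k := k) hpos
      have : x n l + traffic x l ≤ x n k + traffic x k :=
        le_of_mul_le_mul_left (by linarith) ha
      linarith
  exact hlt.not_ge (sum_le_sum fun n _ => hxn n)

end IsNash

theorem stmt5_general (N M : ℕ) (φ a p : ℝ)
    (ha : 0 < a)
    (x : Fin N → Fin M → ℝ) (hx : IsNash N M φ a (fun _ => p) x) :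
    ∀ m : Fin M, ∑ n, x n m = (N : ℝ) * φ / M := by
  intro m
  have hconst : ∀ k, traffic x k = traffic x m := fun k =>
    le_antisymm (hx.traffic_le_of_price_le ha le_rfl) (hx.traffic_le_of_price_le ha le_rfl)
  have htotal := sum_traffic hx.1
  simp only [hconst, sum_const, card_univ, Fintype.card_fin, nsmul_eq_mul] at htotal
  have hM : (M : ℝ) ≠ 0 := Nat.cast_ne_zero.2 (Fin.pos m).ne'
  rw [eq_div_iff hM, ← htotal, mul_comm]
  rfl

/-- with a uniform price `p`, at every Nash equilibrium of the no-agreement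
congestion game the total traffic into each CP equals `N·φ/M`. -/
theorem stmt5 (N M : ℕ) (hN : 1 ≤ N) (hM : 1 ≤ M) (φ a p : ℝ)
    (hφ : 0 < φ) (ha : 0 < a) (hp : 0 ≤ p)
    (x : Fin N → Fin M → ℝ) (hx : IsNash N M φ a (fun _ => p) x) :
    ∀ m : Fin M, ∑ n, x n m = (N : ℝ) * φ / M :=
  stmt5_general N M φ a p ha x hx
end

section
/- Consider the agreement congestion game with N ≥ 2 subscribers and N content providers, demand φ > 0 and congestion parameter a > 0, where every non-associated access is charged the same price q with 0 ≤ q ≤ aφ. Then the profile in which each subscriber n sends x_n^n = (φ + (N−1)q/a)/N to its associated CP n and x_n^m = (φ − q/a)/N to each CP m ≠ n is a Nash equilibrium. In particular, for q = aφ(N+1)/(3N−1) (which satisfies 0 ≤ q ≤ aφ), these flows equal ȳ = (φ/N)·(1 + (N−1)(N+1)/(3N−1)) and z̄ = (φ/N)·(2N−2)/(3N−1), respectively. -/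
/-!
Fix the other subscribers. Subscriber `n` then minimises over the simplex the convex quadratic
`Σ_m y_m (a (y_m + c_m) + p_m)`, where `c_m` is the others' load on CP `m`. Its excess over the
value at `x` is `a Σ (y_m - x_m)²` plus the first-order term `Σ (y_m - x_m) g_m` with marginal
costs `g_m = a (2 x_m + c_m) + p_m`, and the first-order term is nonnegative under the KKT
conditions. In the diagonal profile every CP carries total load `φ`, so
`g_m = a (x_n^m + φ) + p_m`, and the price `q = a (x_n^n - x_n^m)` makes all marginal costs of
subscriber `n` equal.
-/

open Finset

/-- Cost of subscriber `n` in the agreement congestion game: subscriber `n` pays nothing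
per unit of traffic downloaded from its associated CP `n`, and pays `p m` per unit of
traffic from every other CP `m`; the preference (congestion) cost is linear, `D(t) = a·t`. -/
noncomputable def costV (N : ℕ) (a : ℝ) (p : Fin N → ℝ)
    (x : Fin N → Fin N → ℝ) (n : Fin N) : ℝ :=
  ∑ m, x n m * (a * (∑ n', x n' m) + if m = n then 0 else p m)

/-- Nash equilibrium of the agreement congestion game. -/
def IsNashV (N : ℕ) (φ a : ℝ) (p : Fin N → ℝ) (x : Fin N → Fin N → ℝ) : Prop :=
  (∀ n, Feasible N φ (x n)) ∧
  ∀ (n : Fin N) (y : Fin N → ℝ), Feasible N φ y →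
    costV N a p x n ≤ costV N a p (Function.update x n y) n

section QuadraticCost

variable {ι : Type*} [Fintype ι]

def quadCost (a : ℝ) (c p y : ι → ℝ) : ℝ :=
  ∑ m, y m * (a * (y m + c m) + p m)

def marginalCost (a : ℝ) (c p x : ι → ℝ) (m : ι) : ℝ :=
  a * (2 * x m + c m) + p m

theorem quadCost_sub_quadCost (a : ℝ) (c p x y : ι → ℝ) :
    quadCost a c p y - quadCost a c p x =
      a * ∑ m, (y m - x m) ^ 2 + ∑ m, (y m - x m) * marginalCost a c p x m := by
  simp only [quadCost, marginalCost, mul_sum, ← sum_sub_distrib, ← sum_add_distrib]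
  exact sum_congr rfl fun m _ => by ring

theorem quadCost_le_of_kkt {a μ : ℝ} (ha : 0 ≤ a) {c p x y : ι → ℝ}
    (hμ : ∀ m, μ ≤ marginalCost a c p x m)
    (hslack : ∀ m, x m * (marginalCost a c p x m - μ) = 0)
    (hy : ∀ m, 0 ≤ y m) (hsum : ∑ m, y m = ∑ m, x m) :
    quadCost a c p x ≤ quadCost a c p y := by
  have hfirst : 0 ≤ ∑ m, (y m - x m) * marginalCost a c p x m := by
    have hsplit : ∑ m, (y m - x m) * marginalCost a c p x m =
        ∑ m, y m * (marginalCost a c p x m - μ) + μ * (∑ m, y m - ∑ m, x m) := by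
      simp only [mul_sub, mul_sum, ← sum_sub_distrib, ← sum_add_distrib]
      refine sum_congr rfl fun m _ => ?_
      linear_combination -hslack m
    rw [hsplit, hsum, sub_self, mul_zero, add_zero]
    exact sum_nonneg fun m _ => mul_nonneg (hy m) (sub_nonneg.2 (hμ m))
  have hsecond : 0 ≤ a * ∑ m, (y m - x m) ^ 2 :=
    mul_nonneg ha (sum_nonneg fun m _ => sq_nonneg _)
  linarith [quadCost_sub_quadCost a c p x y]

end QuadraticCost

theorem sum_ite_eq_add_card_sub_one_mul {ι : Type*} [Fintype ι] [DecidableEq ι]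
    (i : ι) (Y Z : ℝ) :
    ∑ j, (if j = i then Y else Z) = Y + (Fintype.card ι - 1) * Z := by
  rw [Fintype.sum_eq_add_sum_compl i, if_pos rfl,
    sum_congr rfl fun j hj => if_neg (mem_compl.1 hj ∘ mem_singleton.2), sum_const, card_compl,
    card_singleton, nsmul_eq_mul, Nat.cast_pred (Fintype.card_pos_iff.2 ⟨i⟩)]

theorem sum_update_apply {ι κ M : Type*} [Fintype ι] [DecidableEq ι] [AddCommGroup M]
    (x : ι → κ → M) (n : ι) (y : κ → M) (m : κ) :
    ∑ n', Function.update x n y n' m = ∑ n', x n' m - x n m + y m := by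
  rw [Fintype.sum_eq_add_sum_compl n, Fintype.sum_eq_add_sum_compl n (fun n' => x n' m),
    Function.update_self, sum_congr rfl fun n' hn' =>
      congrFun (Function.update_of_ne (mem_compl.1 hn' ∘ mem_singleton.2) y x) m]
  abel

section AgreementGame

variable {N : ℕ} {φ a : ℝ} {p : Fin N → ℝ} {x : Fin N → Fin N → ℝ}

def othersLoad (x : Fin N → Fin N → ℝ) (n m : Fin N) : ℝ :=
  ∑ n', x n' m - x n m

def agreementPrice (p : Fin N → ℝ) (n m : Fin N) : ℝ :=
  if m = n then 0 else p m

theorem costV_update_self (x : Fin N → Fin N → ℝ) (n : Fin N) (y : Fin N → ℝ) :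
    costV N a p (Function.update x n y) n =
      quadCost a (othersLoad x n) (agreementPrice p n) y := by
  simp only [costV, quadCost, othersLoad, agreementPrice, sum_update_apply, Function.update_self]
  exact sum_congr rfl fun m _ => by ring

theorem costV_eq_quadCost (x : Fin N → Fin N → ℝ) (n : Fin N) :
    costV N a p x n = quadCost a (othersLoad x n) (agreementPrice p n) (x n) := by
  simpa using costV_update_self (a := a) (p := p) x n (x n)

theorem isNashV_of_kkt (ha : 0 ≤ a) (hfeas : ∀ n, Feasible N φ (x n))
    (hkkt : ∀ n, ∃ μ,
      (∀ m, μ ≤ marginalCost a (othersLoad x n) (agreementPrice p n) (x n) m) ∧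
        ∀ m, x n m * (marginalCost a (othersLoad x n) (agreementPrice p n) (x n) m - μ) = 0) :
    IsNashV N φ a p x := by
  refine ⟨hfeas, fun n y hy => ?_⟩
  obtain ⟨μ, hμ, hslack⟩ := hkkt n
  rw [costV_eq_quadCost, costV_update_self]
  exact quadCost_le_of_kkt ha hμ hslack hy.1 (hy.2.trans (hfeas n).2.symm)

theorem isNashV_diagonal (ha : 0 ≤ a) {Y Z q : ℝ} (hY : 0 ≤ Y) (hZ : 0 ≤ Z)
    (hφ : Y + (N - 1) * Z = φ) (hq : q = a * (Y - Z)) :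
    IsNashV N φ a (fun _ => q) (fun n m => if m = n then Y else Z) := by
  have hrow : ∀ n : Fin N, ∑ m, (if m = n then Y else Z) = φ := fun n => by
    rw [sum_ite_eq_add_card_sub_one_mul, Fintype.card_fin, hφ]
  have hcol : ∀ m : Fin N, ∑ n, (if m = n then Y else Z) = φ := fun m => by
    simpa only [eq_comm] using hrow m
  have hmarginal : ∀ n m : Fin N,
      marginalCost a (othersLoad (fun n m => if m = n then Y else Z) n)
        (agreementPrice (fun _ => q) n) (fun m => if m = n then Y else Z) m = a * (Y + φ) := by
    intro n m
    simp only [marginalCost, othersLoad, agreementPrice, hcol]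
    split_ifs
    · ring
    · rw [hq]; ring
  refine isNashV_of_kkt ha (fun n => ⟨fun m => ite_nonneg hY hZ, hrow n⟩) fun n =>
    ⟨a * (Y + φ), fun m => (hmarginal n m).ge, fun m => by rw [hmarginal, sub_self, mul_zero]⟩

end AgreementGame

theorem stmt6_general (N : ℕ) (hN : 2 ≤ N) (φ a q : ℝ)
    (ha : 0 < a) (hq0 : 0 ≤ q) (hq1 : q ≤ a * φ) :
    IsNashV N φ a (fun _ => q)
      (fun n m => if m = n then (φ + ((N : ℝ) - 1) * q / a) / N else (φ - q / a) / N) ∧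
    (0 ≤ a * φ * ((N : ℝ) + 1) / (3 * (N : ℝ) - 1) ∧
      a * φ * ((N : ℝ) + 1) / (3 * (N : ℝ) - 1) ≤ a * φ ∧
      (φ + ((N : ℝ) - 1) * (a * φ * ((N : ℝ) + 1) / (3 * (N : ℝ) - 1)) / a) / N =
        (φ / N) * (1 + ((N : ℝ) - 1) * ((N : ℝ) + 1) / (3 * (N : ℝ) - 1)) ∧
      (φ - (a * φ * ((N : ℝ) + 1) / (3 * (N : ℝ) - 1)) / a) / N =
        (φ / N) * ((2 * (N : ℝ) - 2) / (3 * (N : ℝ) - 1))) := by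
  have hN' : (2 : ℝ) ≤ N := by exact_mod_cast hN
  have hqa : q / a ≤ φ := (div_le_iff₀' ha).2 hq1
  have hφ : 0 ≤ φ := (div_nonneg hq0 ha.le).trans hqa
  have hden : 0 < 3 * (N : ℝ) - 1 := by linarith
  refine ⟨isNashV_diagonal ha.le ?_ ?_ ?_ ?_, ?_, ?_, ?_, ?_⟩
  · have : 0 ≤ ((N : ℝ) - 1) * q / a := div_nonneg (mul_nonneg (by linarith) hq0) ha.le
    exact div_nonneg (by linarith) N.cast_nonneg
  · exact div_nonneg (sub_nonneg.2 hqa) N.cast_nonneg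
  · field_simp; ring
  · field_simp; ring
  · exact div_nonneg (by positivity) hden.le
  · rw [div_le_iff₀ hden]; nlinarith [mul_nonneg ha.le hφ]
  · field_simp
  · have hden' : (N : ℝ) * 3 - 1 ≠ 0 := by linarith
    field_simp
    ring

/-- with a uniform price `q ∈ [0, aφ]` for non-associated access, the profile
with `x_n^n = (φ + (N−1)q/a)/N` and `x_n^m = (φ − q/a)/N` for `m ≠ n` is a Nash equilibrium
of the agreement congestion game.  In particular, `q = aφ(N+1)/(3N−1)` lies in `[0, aφ]`
and the corresponding flows equal `ȳ = (φ/N)(1 + (N−1)(N+1)/(3N−1))` and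
`z̄ = (φ/N)(2N−2)/(3N−1)`. -/
theorem stmt6 (N : ℕ) (hN : 2 ≤ N) (φ a q : ℝ)
    (hφ : 0 < φ) (ha : 0 < a) (hq0 : 0 ≤ q) (hq1 : q ≤ a * φ) :
    IsNashV N φ a (fun _ => q)
      (fun n m => if m = n then (φ + ((N : ℝ) - 1) * q / a) / N else (φ - q / a) / N) ∧
    (0 ≤ a * φ * ((N : ℝ) + 1) / (3 * (N : ℝ) - 1) ∧
      a * φ * ((N : ℝ) + 1) / (3 * (N : ℝ) - 1) ≤ a * φ ∧
      (φ + ((N : ℝ) - 1) * (a * φ * ((N : ℝ) + 1) / (3 * (N : ℝ) - 1)) / a) / N =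
        (φ / N) * (1 + ((N : ℝ) - 1) * ((N : ℝ) + 1) / (3 * (N : ℝ) - 1)) ∧
      (φ - (a * φ * ((N : ℝ) + 1) / (3 * (N : ℝ) - 1)) / a) / N =
        (φ / N) * ((2 * (N : ℝ) - 2) / (3 * (N : ℝ) - 1))) :=
  stmt6_general N hN φ a q ha hq0 hq1
end
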